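/- Let X₁ and X₂ be real-valued random variables on a probability space with finite second moments such that Cov(X₁,X₂) ≥ 0, and set Y := min(X₁,X₂) and Z := max(X₁,X₂). Then Cov(Y,Z) ≥ 0. -/

import Mathlib

/-!
Pointwise `min X₁ X₂ * max X₁ X₂ = X₁ * X₂` and `min X₁ X₂ + max X₁ X₂ = X₁ + X₂`, so with
`m := E[min X₁ X₂]` the covariances differ by `E X₁ E X₂ - m (E X₁ + E X₂ - m)
= (E X₁ - m) (E X₂ - m)`, which is nonnegative because `m` is below both means.
-/

open MeasureTheory ProbabilityTheory

section MinMax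

variable {Ω : Type*} [MeasurableSpace Ω] {μ : Measure Ω} {X₁ X₂ : Ω → ℝ}

theorem integral_min_mul_max :
    ∫ ω, min (X₁ ω) (X₂ ω) * max (X₁ ω) (X₂ ω) ∂μ = ∫ ω, X₁ ω * X₂ ω ∂μ := by
  simp only [min_mul_max]

theorem integral_min_add_integral_max (h₁ : Integrable X₁ μ) (h₂ : Integrable X₂ μ) :
    (∫ ω, min (X₁ ω) (X₂ ω) ∂μ) + ∫ ω, max (X₁ ω) (X₂ ω) ∂μ
      = (∫ ω, X₁ ω ∂μ) + ∫ ω, X₂ ω ∂μ := by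
  have hmin : Integrable (fun ω => min (X₁ ω) (X₂ ω)) μ := h₁.inf h₂
  have hmax : Integrable (fun ω => max (X₁ ω) (X₂ ω)) μ := h₁.sup h₂
  rw [← integral_add hmin hmax, ← integral_add h₁ h₂]
  simp only [min_add_max]

theorem integral_min_mul_max_sub_eq (h₁ : Integrable X₁ μ) (h₂ : Integrable X₂ μ) :
    (∫ ω, min (X₁ ω) (X₂ ω) * max (X₁ ω) (X₂ ω) ∂μ)
        - (∫ ω, min (X₁ ω) (X₂ ω) ∂μ) * ∫ ω, max (X₁ ω) (X₂ ω) ∂μ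
      = ((∫ ω, X₁ ω * X₂ ω ∂μ) - (∫ ω, X₁ ω ∂μ) * ∫ ω, X₂ ω ∂μ)
        + ((∫ ω, X₁ ω ∂μ) - ∫ ω, min (X₁ ω) (X₂ ω) ∂μ)
          * ((∫ ω, X₂ ω ∂μ) - ∫ ω, min (X₁ ω) (X₂ ω) ∂μ) := by
  have hmax : ∫ ω, max (X₁ ω) (X₂ ω) ∂μ
      = (∫ ω, X₁ ω ∂μ) + (∫ ω, X₂ ω ∂μ) - ∫ ω, min (X₁ ω) (X₂ ω) ∂μ := by
    linarith [integral_min_add_integral_max h₁ h₂]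
  rw [integral_min_mul_max, hmax]
  ring

theorem integral_min_le_integral_left (h₁ : Integrable X₁ μ) (h₂ : Integrable X₂ μ) :
    ∫ ω, min (X₁ ω) (X₂ ω) ∂μ ≤ ∫ ω, X₁ ω ∂μ :=
  integral_mono (h₁.inf h₂) h₁ fun _ => min_le_left _ _

theorem integral_min_le_integral_right (h₁ : Integrable X₁ μ) (h₂ : Integrable X₂ μ) :
    ∫ ω, min (X₁ ω) (X₂ ω) ∂μ ≤ ∫ ω, X₂ ω ∂μ :=
  integral_mono (h₁.inf h₂) h₂ fun _ => min_le_right _ _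

end MinMax

/-- For real random variables `X₁, X₂` with finite second moments and
`Cov(X₁,X₂) ≥ 0`, with `Y := min(X₁,X₂)` and `Z := max(X₁,X₂)`, one has
`Cov(Y,Z) ≥ 0`. -/
theorem cov_min_max_nonneg {Ω : Type*} [MeasureSpace Ω]
    [IsProbabilityMeasure (ℙ : Measure Ω)]
    (X₁ X₂ : Ω → ℝ) (hX₁ : MemLp X₁ 2) (hX₂ : MemLp X₂ 2)
    (hcov : 0 ≤ (∫ ω, X₁ ω * X₂ ω) - (∫ ω, X₁ ω) * (∫ ω, X₂ ω))
    (Y Z : Ω → ℝ) (hY : Y = fun ω => min (X₁ ω) (X₂ ω))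
    (hZ : Z = fun ω => max (X₁ ω) (X₂ ω)) :
    0 ≤ (∫ ω, Y ω * Z ω) - (∫ ω, Y ω) * (∫ ω, Z ω) := by
  subst hY hZ
  have h₁ : Integrable X₁ := hX₁.integrable one_le_two
  have h₂ : Integrable X₂ := hX₂.integrable one_le_two
  rw [integral_min_mul_max_sub_eq h₁ h₂]
  have hmin_gap : 0 ≤ ((∫ ω, X₁ ω) - ∫ ω, min (X₁ ω) (X₂ ω))
      * ((∫ ω, X₂ ω) - ∫ ω, min (X₁ ω) (X₂ ω)) :=
    mul_nonneg (sub_nonneg.2 (integral_min_le_integral_left h₁ h₂))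
      (sub_nonneg.2 (integral_min_le_integral_right h₁ h₂))
  exact add_nonneg hcov hmin_gap
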